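/- arXiv:2403.12875 — 2 statements merged into one kernel-verified Lean document; each statement's English description precedes it below -/
import Mathlib

section
/- Assume ∫_{[1,∞)} x^{ε-1/2} μ(dx) < ∞ for some ε ∈ (0, 1/2). Then ∫_0^T ‖S(t)i‖²_{L(ℝ^d;V)} dt < ∞; more precisely ‖S(t)i‖²_{L(ℝ^d;V)} ≤ c₁ + c₂ t^{ε-1} for all t ∈ (0,T] and suitable finite constants c₁, c₂. -/
/-!
Split the `μ`-integral at `x = 1`. On `[0,1)` the integrand is at most `2`. On `[1,∞)`,
`(1+x)ω(x) ≤ 2 x^{1-ε} x^{ε-1/2}`, and `e^{-u} u^{1-ε} ≤ 1` with `u = 2tx` gives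
`e^{-2tx} x^{1-ε} ≤ t^{ε-1}`; so the integrand is dominated by `2 t^{ε-1} x^{ε-1/2}`, which is
`μ`-integrable on `[1,∞)`. Finally `t^{ε-1}` is integrable at `0` because `ε > 0`.
-/

open MeasureTheory Set ENNReal

/-- The weight function `ω(x) = 1 ∧ x^{-1/2}` (with `ω(x) = 1` for `x ≤ 0`). -/
noncomputable def omg (x : ℝ) : ℝ := if x ≤ 0 then 1 else min 1 (x ^ (-(1:ℝ)/2))

open Real

lemma omg_nonneg (x : ℝ) : 0 ≤ omg x := by
  unfold omg
  split_ifs with hx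
  · exact zero_le_one
  · exact le_min zero_le_one (rpow_nonneg (not_le.1 hx).le _)

lemma omg_le_one (x : ℝ) : omg x ≤ 1 := by
  unfold omg
  split_ifs
  · exact le_rfl
  · exact min_le_left _ _

lemma omg_of_one_le {x : ℝ} (hx : 1 ≤ x) : omg x = x ^ (-(1:ℝ)/2) := by
  rw [omg, if_neg (by linarith), min_eq_right (rpow_le_one_of_one_le_of_nonpos hx (by norm_num))]

lemma Real.exp_neg_mul_rpow_le_one {u a : ℝ} (hu : 0 ≤ u) (ha₀ : 0 ≤ a) (ha₁ : a ≤ 1) :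
    exp (-u) * u ^ a ≤ 1 := by
  have hpow : u ^ a ≤ u + 1 := by
    rcases le_total u 1 with h | h
    · linarith [rpow_le_one hu h ha₀]
    · linarith [rpow_le_self_of_one_le h ha₁]
  calc exp (-u) * u ^ a ≤ exp (-u) * (u + 1) := by gcongr
    _ ≤ exp (-u) * exp u := by gcongr; exact add_one_le_exp u
    _ = 1 := by rw [← exp_add, neg_add_cancel, exp_zero]

lemma Real.exp_neg_mul_mul_rpow_le {s x a : ℝ} (hs : 0 < s) (hx : 0 ≤ x) (ha₀ : 0 ≤ a)
    (ha₁ : a ≤ 1) : exp (-(s * x)) * x ^ a ≤ s ^ (-a) := by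
  have h := exp_neg_mul_rpow_le_one (mul_nonneg hs.le hx) ha₀ ha₁
  rw [mul_rpow hs.le hx] at h
  rw [rpow_neg hs.le, ← one_div, le_div_iff₀ (rpow_pos_of_pos hs a)]
  linarith

noncomputable def normSqDensity (t x : ℝ) : ℝ := exp (-(2 * t * x)) * ((1 + x) * omg x)

/-- `‖S(t)i‖²_{L(ℝ^d;V)} = ∫_{[0,∞)} e^{-2tx}(1+x)ω(x) μ(dx)`. -/
noncomputable def normSqSemigroup (μ : Measure ℝ) (t : ℝ) : ℝ≥0∞ :=
  ∫⁻ x in Ici 0, ENNReal.ofReal (normSqDensity t x) ∂μ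

lemma normSqDensity_le_two {t x : ℝ} (ht : 0 ≤ t) (hx : x ∈ Ico (0 : ℝ) 1) :
    normSqDensity t x ≤ 2 := by
  have hexp : exp (-(2 * t * x)) ≤ 1 := exp_le_one_iff.2 (by nlinarith [hx.1])
  calc normSqDensity t x ≤ 1 * (2 * 1) :=
        mul_le_mul hexp (mul_le_mul (by linarith [hx.2]) (omg_le_one x) (omg_nonneg x) zero_le_two)
          (mul_nonneg (by linarith [hx.1]) (omg_nonneg x)) zero_le_one
    _ = 2 := by norm_num

lemma normSqDensity_le_of_one_le {ε t x : ℝ} (hε₀ : 0 ≤ ε) (hε₁ : ε ≤ 1) (ht : 0 < t)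
    (hx : 1 ≤ x) : normSqDensity t x ≤ 2 * t ^ (ε - 1) * x ^ (ε - 1/2) := by
  have hx₀ : 0 < x := zero_lt_one.trans_le hx
  have hsplit : x * x ^ (-(1:ℝ)/2) = x ^ (1 - ε) * x ^ (ε - 1/2) := by
    nth_rewrite 1 [← rpow_one x]
    rw [← rpow_add hx₀, ← rpow_add hx₀]
    ring_nf
  have hexp : exp (-(2 * t * x)) * x ^ (1 - ε) ≤ t ^ (ε - 1) := by
    refine (exp_neg_mul_mul_rpow_le (by positivity) hx₀.le (by linarith) (by linarith)).trans ?_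
    rw [neg_sub]
    exact rpow_le_rpow_of_nonpos ht (by linarith) (by linarith)
  calc normSqDensity t x ≤ exp (-(2 * t * x)) * (2 * x * x ^ (-(1:ℝ)/2)) := by
        rw [normSqDensity, omg_of_one_le hx]
        gcongr
        linarith
    _ = 2 * (exp (-(2 * t * x)) * x ^ (1 - ε)) * x ^ (ε - 1/2) := by
        rw [mul_assoc 2 x, hsplit]
        ring
    _ ≤ 2 * t ^ (ε - 1) * x ^ (ε - 1/2) := by gcongr

theorem normSqSemigroup_le (μ : Measure ℝ) {ε t : ℝ} (hε₀ : 0 ≤ ε) (hε₁ : ε ≤ 1) (ht : 0 < t) :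
    normSqSemigroup μ t ≤ 2 * μ (Ico 0 1) +
      ENNReal.ofReal (2 * t ^ (ε - 1)) * ∫⁻ x in Ici 1, ENNReal.ofReal (x ^ (ε - 1/2)) ∂μ := by
  rw [normSqSemigroup, ← Ico_union_Ici_eq_Ici zero_le_one,
    lintegral_union measurableSet_Ici ((Iio_disjoint_Ici le_rfl).mono_left Ico_subset_Iio_self)]
  gcongr ?_ + ?_
  · calc ∫⁻ x in Ico 0 1, ENNReal.ofReal (normSqDensity t x) ∂μ ≤ ∫⁻ _ in Ico 0 1, 2 ∂μ :=
          setLIntegral_mono' measurableSet_Ico fun x hx =>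
            ofReal_le_of_le_toReal (by simpa using normSqDensity_le_two ht.le hx)
      _ = 2 * μ (Ico 0 1) := setLIntegral_const _ _
  · rw [← lintegral_const_mul' _ _ ofReal_ne_top]
    refine setLIntegral_mono' measurableSet_Ici fun x hx => ?_
    rw [← ofReal_mul (by positivity)]
    exact ofReal_le_ofReal (normSqDensity_le_of_one_le hε₀ hε₁ ht hx)

theorem stmt_8_general (μ : Measure ℝ) (ε T : ℝ) (hε : 0 < ε) (hε' : ε < 1/2)
    (hμ0 : μ (Ico (0:ℝ) 1) < ⊤)
    (hμ1 : (∫⁻ x in Ici (1:ℝ), ENNReal.ofReal (x ^ (ε - 1/2)) ∂μ) < ⊤) :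
    ∃ c₁ c₂ : ℝ, 0 ≤ c₁ ∧ 0 ≤ c₂ ∧
      (∀ t ∈ Ioc (0:ℝ) T,
        (∫⁻ x in Ici (0:ℝ),
            ENNReal.ofReal (Real.exp (-(2 * t * x)) * ((1 + x) * omg x)) ∂μ) ≤
          ENNReal.ofReal (c₁ + c₂ * t ^ (ε - 1))) ∧
      (∫⁻ t in Ioc (0:ℝ) T,
          ∫⁻ x in Ici (0:ℝ),
            ENNReal.ofReal (Real.exp (-(2 * t * x)) * ((1 + x) * omg x)) ∂μ) < ⊤ := by
  set J := ∫⁻ x in Ici (1:ℝ), ENNReal.ofReal (x ^ (ε - 1/2)) ∂μ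
  have hbound : ∀ t ∈ Ioc (0:ℝ) T, normSqSemigroup μ t ≤
      ENNReal.ofReal (2 * (μ (Ico 0 1)).toReal + 2 * J.toReal * t ^ (ε - 1)) := by
    intro t ht
    have htε : 0 ≤ t ^ (ε - 1) := rpow_nonneg ht.1.le _
    refine (normSqSemigroup_le μ hε.le (by linarith) ht.1).trans_eq ?_
    rw [ofReal_add (by positivity) (by positivity),
      ofReal_mul (by positivity : (0:ℝ) ≤ 2 * J.toReal),
      ofReal_mul zero_le_two, ofReal_mul zero_le_two, ofReal_mul zero_le_two,
      ofReal_toReal hμ0.ne, ofReal_toReal hμ1.ne, ofReal_ofNat]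
    ring
  have hint : IntegrableOn (fun t ↦ 2 * (μ (Ico 0 1)).toReal + 2 * J.toReal * t ^ (ε - 1))
      (Ioc 0 T) :=
    (integrableOn_const measure_Ioc_lt_top.ne).add
      ((intervalIntegral.intervalIntegrable_rpow' (by linarith)).1.const_mul _)
  refine ⟨_, _, by positivity, by positivity, hbound, ?_⟩
  calc ∫⁻ t in Ioc 0 T, normSqSemigroup μ t
      ≤ ∫⁻ t in Ioc 0 T,
          ENNReal.ofReal (2 * (μ (Ico 0 1)).toReal + 2 * J.toReal * t ^ (ε - 1)) :=
        setLIntegral_mono' measurableSet_Ioc hbound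
    _ < ⊤ := hint.lintegral_lt_top

/-- If `∫_{[1,∞)} x^{ε-1/2} μ(dx) < ∞` for some `ε ∈ (0,1/2)`, then
`‖S(t)i‖²_{L(ℝ^d;V)} = ∫ e^{-2tx}(1+x)ω(x) μ(dx) ≤ c₁ + c₂ t^{ε-1}` on `(0,T]`,
and in particular `∫_0^T ‖S(t)i‖²_{L(ℝ^d;V)} dt < ∞`. -/
theorem stmt_8 (μ : Measure ℝ) (ε T : ℝ) (hε : 0 < ε) (hε' : ε < 1/2) (hT : 0 < T)
    (hμ0 : μ (Ico (0:ℝ) 1) < ⊤)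
    (hμ1 : (∫⁻ x in Ici (1:ℝ), ENNReal.ofReal (x ^ (ε - 1/2)) ∂μ) < ⊤) :
    ∃ c₁ c₂ : ℝ, 0 ≤ c₁ ∧ 0 ≤ c₂ ∧
      (∀ t ∈ Ioc (0:ℝ) T,
        (∫⁻ x in Ici (0:ℝ),
            ENNReal.ofReal (Real.exp (-(2 * t * x)) * ((1 + x) * omg x)) ∂μ) ≤
          ENNReal.ofReal (c₁ + c₂ * t ^ (ε - 1))) ∧
      (∫⁻ t in Ioc (0:ℝ) T,
          ∫⁻ x in Ici (0:ℝ),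
            ENNReal.ofReal (Real.exp (-(2 * t * x)) * ((1 + x) * omg x)) ∂μ) < ⊤ :=
  stmt_8_general μ ε T hε hε' hμ0 hμ1
end

section
/- For y bounded measurable, ∫_0^T ‖e^{-t·}y‖_V² dt ≤ (1/2 + T) ‖y‖_∞² ∫_{[0,∞)} ω(x) μ(dx); in particular the forcing term x(t) = ∫_{[0,∞)} e^{-tx} y(x) μ(dx) belongs to L²(0,T; ℝ^d). -/
open MeasureTheory Set ENNReal

lemma omg_pos (x : ℝ) : 0 < omg x := by
  unfold omg
  split_ifs with h
  · exact one_pos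
  · exact lt_min one_pos (Real.rpow_pos_of_pos (not_le.mp h) _)

@[fun_prop]
lemma measurable_omg : Measurable omg :=
  Measurable.ite measurableSet_Iic measurable_const
    (measurable_const.min (measurable_id.pow_const _))

lemma MeasureTheory.Integrable.sigmaFinite_of_ae_ne_zero {α E : Type*} [MeasurableSpace α]
    [NormedAddCommGroup E] {ν : Measure α} {f : α → E} (hf : Integrable f ν)
    (hf0 : ∀ᵐ x ∂ν, f x ≠ 0) : SigmaFinite ν := by
  obtain ⟨t, ht, hf_compl, hσ⟩ := hf.aefinStronglyMeasurable.exists_set_sigmaFinite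
  have h_compl : ν.restrict tᶜ = 0 := by
    rw [← ae_eq_bot, ← Filter.eventually_false_iff_eq_bot]
    filter_upwards [hf_compl, ae_restrict_of_ae hf0] with x hx hx0 using hx0 hx
  rwa [← Measure.restrict_add_restrict_compl (μ := ν) ht, h_compl, add_zero]

lemma setIntegral_Ioc_exp_neg_mul_le {c T : ℝ} (hc : 0 ≤ c) (hT : 0 ≤ T) :
    ∫ t in Ioc 0 T, Real.exp (-c * t) ≤ T := by
  calc ∫ t in Ioc 0 T, Real.exp (-c * t) ≤ ∫ _ in Ioc 0 T, (1 : ℝ) := by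
        refine setIntegral_mono_on ?_ (integrableOn_const (by simp)) measurableSet_Ioc
          fun t ht => Real.exp_le_one_iff.mpr (by nlinarith [ht.1])
        exact (Real.continuous_exp.comp (continuous_const_mul _)).integrableOn_Icc.mono_set
          Ioc_subset_Icc_self
    _ = T := by simp [hT]

lemma mul_setIntegral_Ioc_exp_neg_mul_le_one {c : ℝ} (hc : 0 ≤ c) (T : ℝ) :
    c * ∫ t in Ioc 0 T, Real.exp (-c * t) ≤ 1 := by
  rcases hc.eq_or_lt with rfl | hc
  · simp
  have h_Ioi : ∫ t in Ioi 0, Real.exp (-c * t) = 1 / c := by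
    rw [integral_exp_mul_Ioi (by linarith) 0]
    field_simp
    simp
  calc c * ∫ t in Ioc 0 T, Real.exp (-c * t) ≤ c * ∫ t in Ioi 0, Real.exp (-c * t) := by
        refine mul_le_mul_of_nonneg_left ?_ hc.le
        exact setIntegral_mono_set (integrableOn_exp_mul_Ioi (by linarith) 0)
          (ae_of_all _ fun t => (Real.exp_pos _).le) Ioc_subset_Ioi_self.eventuallyLE
    _ = 1 := by rw [h_Ioi]; field_simp

lemma ENNReal.lintegral_sq_le_lintegral_mul_lintegral_inv {α : Type*} [MeasurableSpace α]
    {ν : Measure α} {u v : α → ℝ≥0∞} (hu : AEMeasurable u ν) (hv : AEMeasurable v ν)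
    (hv0 : ∀ᵐ x ∂ν, v x ≠ 0) (hv_top : ∀ᵐ x ∂ν, v x ≠ ∞) :
    (∫⁻ x, u x ∂ν) ^ 2 ≤ (∫⁻ x, u x ^ 2 * v x ∂ν) * ∫⁻ x, (v x)⁻¹ ∂ν := by
  set f : α → ℝ≥0∞ := fun x => u x * v x ^ (1 / 2 : ℝ)
  set g : α → ℝ≥0∞ := fun x => (v x ^ (1 / 2 : ℝ))⁻¹
  have h_sq_half (a : ℝ≥0∞) : (a ^ (1 / 2 : ℝ)) ^ (2 : ℝ) = a := by
    rw [← ENNReal.rpow_mul]; norm_num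
  have h_fg : u =ᵐ[ν] f * g := by
    filter_upwards [hv0, hv_top] with x hx0 hx_top
    simp only [f, g, Pi.mul_apply, mul_assoc]
    rw [ENNReal.mul_inv_cancel (by simp [hx0]) (by simp [hx_top]), mul_one]
  have h_holder := ENNReal.lintegral_mul_le_Lp_mul_Lq ν .two_two (f := f) (g := g)
    (hu.mul (hv.pow_const _)) (hv.pow_const _).inv
  rw [← lintegral_congr_ae h_fg] at h_holder
  have h_f : ∫⁻ x, f x ^ (2 : ℝ) ∂ν = ∫⁻ x, u x ^ 2 * v x ∂ν := by
    simp only [f, ENNReal.mul_rpow_of_nonneg _ _ zero_le_two, h_sq_half]; norm_cast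
  have h_g : ∫⁻ x, g x ^ (2 : ℝ) ∂ν = ∫⁻ x, (v x)⁻¹ ∂ν := by
    simp only [g, ENNReal.inv_rpow, h_sq_half]
  rw [h_f, h_g, ← ENNReal.mul_rpow_of_nonneg _ _ (by norm_num)] at h_holder
  calc (∫⁻ x, u x ∂ν) ^ 2 ≤ (((∫⁻ x, u x ^ 2 * v x ∂ν) * ∫⁻ x, (v x)⁻¹ ∂ν) ^ (1 / 2 : ℝ)) ^ 2 :=
        pow_le_pow_left₀ zero_le h_holder 2
    _ = _ := by rw [← ENNReal.rpow_natCast, Nat.cast_ofNat, h_sq_half]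

lemma lintegral_Ioc_one_add_mul_exp_le {x T : ℝ} (hx : 0 ≤ x) (hT : 0 ≤ T) :
    ∫⁻ t in Ioc 0 T, ENNReal.ofReal ((1 + x) * Real.exp (-(2 * x) * t)) ≤
      ENNReal.ofReal (1 / 2 + T) := by
  have h_int : IntegrableOn (fun t => (1 + x) * Real.exp (-(2 * x) * t)) (Ioc 0 T) :=
    ((continuous_const.mul (Real.continuous_exp.comp (continuous_const_mul _))).integrableOn_Icc
      ).mono_set Ioc_subset_Icc_self
  rw [← ofReal_integral_eq_lintegral_ofReal h_int (ae_of_all _ fun t => by positivity)]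
  refine ENNReal.ofReal_le_ofReal ?_
  have h₁ := setIntegral_Ioc_exp_neg_mul_le (by positivity : 0 ≤ 2 * x) hT
  have h₂ := mul_setIntegral_Ioc_exp_neg_mul_le_one (by positivity : 0 ≤ 2 * x) T
  rw [integral_const_mul]
  linarith

variable {E : Type*} [NormedAddCommGroup E]

/-- `‖Y‖_V²` in the notation of the paper. -/
noncomputable def vNormSq (μ : Measure ℝ) (Y : ℝ → E) : ℝ≥0∞ :=
  ∫⁻ x in Ici 0, ENNReal.ofReal (‖Y x‖ ^ 2 * ((1 + x) * omg x)) ∂μ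

variable [NormedSpace ℝ E]

lemma norm_exp_smul_sq_mul_le {y : ℝ → E} {M : ℝ} (hM : ∀ x, ‖y x‖ ≤ M) {x : ℝ} (hx : 0 ≤ x)
    (t : ℝ) :
    ‖Real.exp (-(t * x)) • y x‖ ^ 2 * ((1 + x) * omg x) ≤
      M ^ 2 * omg x * ((1 + x) * Real.exp (-(2 * x) * t)) := by
  have h_exp : Real.exp (-(t * x)) ^ 2 = Real.exp (-(2 * x) * t) := by
    rw [← Real.exp_nat_mul]; ring_nf
  have h_y : ‖y x‖ ^ 2 ≤ M ^ 2 := pow_le_pow_left₀ (norm_nonneg _) (hM x) 2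
  rw [norm_smul, Real.norm_of_nonneg (Real.exp_pos _).le, mul_pow, h_exp]
  have := omg_pos x
  have := Real.exp_pos (-(2 * x) * t)
  calc Real.exp (-(2 * x) * t) * ‖y x‖ ^ 2 * ((1 + x) * omg x)
      = ‖y x‖ ^ 2 * (omg x * ((1 + x) * Real.exp (-(2 * x) * t))) := by ring
    _ ≤ M ^ 2 * (omg x * ((1 + x) * Real.exp (-(2 * x) * t))) := by gcongr
    _ = _ := by ring

lemma lintegral_vNormSq_exp_smul_le {μ : Measure ℝ} [SFinite (μ.restrict (Ici 0))]
    {y : ℝ → E} {M T : ℝ} (hM : ∀ x, ‖y x‖ ≤ M) (hT : 0 ≤ T)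
    (hω : Integrable omg (μ.restrict (Ici 0))) :
    ∫⁻ t in Ioc 0 T, vNormSq μ (fun x => Real.exp (-(t * x)) • y x) ≤
      ENNReal.ofReal ((1 / 2 + T) * M ^ 2 * ∫ x in Ici 0, omg x ∂μ) := by
  calc ∫⁻ t in Ioc 0 T, vNormSq μ (fun x => Real.exp (-(t * x)) • y x)
      ≤ ∫⁻ t in Ioc 0 T, ∫⁻ x in Ici 0, ENNReal.ofReal (M ^ 2 * omg x) *
          ENNReal.ofReal ((1 + x) * Real.exp (-(2 * x) * t)) ∂μ := by
        refine lintegral_mono fun t => setLIntegral_mono (by fun_prop) fun x hx => ?_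
        rw [← ENNReal.ofReal_mul (by have := omg_pos x; positivity)]
        exact ENNReal.ofReal_le_ofReal (norm_exp_smul_sq_mul_le hM hx t)
    _ = ∫⁻ x in Ici 0, ENNReal.ofReal (M ^ 2 * omg x) *
          (∫⁻ t in Ioc 0 T, ENNReal.ofReal ((1 + x) * Real.exp (-(2 * x) * t))) ∂μ := by
        rw [lintegral_lintegral_swap (by fun_prop)]
        exact setLIntegral_congr_fun measurableSet_Ici fun x _ =>
          lintegral_const_mul _ (by fun_prop)
    _ ≤ ∫⁻ x in Ici 0, ENNReal.ofReal (M ^ 2 * omg x) * ENNReal.ofReal (1 / 2 + T) ∂μ :=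
        setLIntegral_mono (by fun_prop) fun x hx =>
          mul_le_mul_right (lintegral_Ioc_one_add_mul_exp_le hx hT) _
    _ = ENNReal.ofReal ((1 / 2 + T) * M ^ 2 * ∫ x in Ici 0, omg x ∂μ) := by
        rw [lintegral_mul_const _ (by fun_prop), ← ofReal_integral_eq_lintegral_ofReal
          (hω.const_mul _) (ae_of_all _ fun x => by have := omg_pos x; positivity),
          ← ENNReal.ofReal_mul (integral_nonneg fun x => by have := omg_pos x; positivity),
          integral_const_mul]
        ring_nf

lemma enorm_setIntegral_Ici_sq_le {μ : Measure ℝ} {Y : ℝ → E}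
    (hY : AEStronglyMeasurable Y (μ.restrict (Ici 0))) :
    ‖∫ x in Ici 0, Y x ∂μ‖ₑ ^ 2 ≤
      vNormSq μ Y * ∫⁻ x in Ici 0, ENNReal.ofReal (1 / ((1 + x) * omg x)) ∂μ := by
  have h_weight_pos : ∀ x ∈ Ici (0 : ℝ), 0 < (1 + x) * omg x := fun x hx =>
    mul_pos (by linarith [mem_Ici.mp hx]) (omg_pos x)
  have h_cs := ENNReal.lintegral_sq_le_lintegral_mul_lintegral_inv hY.enorm
    (v := fun x => ENNReal.ofReal ((1 + x) * omg x)) (by fun_prop)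
    ((ae_restrict_iff' measurableSet_Ici).mpr (ae_of_all _ fun x hx => by
      simpa using h_weight_pos x hx))
    (ae_of_all _ fun _ => ofReal_ne_top)
  calc ‖∫ x in Ici 0, Y x ∂μ‖ₑ ^ 2 ≤ (∫⁻ x in Ici 0, ‖Y x‖ₑ ∂μ) ^ 2 :=
        pow_le_pow_left₀ zero_le (enorm_integral_le_lintegral_enorm _) 2
    _ ≤ _ := h_cs
    _ = _ := by
        congr 1
        · refine lintegral_congr fun x => ?_
          rw [← ofReal_norm, ← ENNReal.ofReal_pow (norm_nonneg _),
            ← ENNReal.ofReal_mul (by positivity)]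
        · refine setLIntegral_congr_fun measurableSet_Ici fun x hx => ?_
          rw [one_div, ENNReal.ofReal_inv_of_pos (h_weight_pos x hx)]

lemma memLp_two_setIntegral_Ici {μ : Measure ℝ} [SFinite (μ.restrict (Ici 0))]
    {ν : Measure ℝ} {Y : ℝ → ℝ → E} (hY : StronglyMeasurable (Function.uncurry Y))
    (hV : ∫⁻ t, vNormSq μ (Y t) ∂ν < ∞)
    (hP : Integrable (fun x => 1 / ((1 + x) * omg x)) (μ.restrict (Ici 0))) :
    MemLp (fun t => ∫ x in Ici 0, Y t x ∂μ) 2 ν := by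
  have hC := hP.lintegral_lt_top
  refine ⟨hY.integral_prod_right'.aestronglyMeasurable, ?_⟩
  rw [eLpNorm_lt_top_iff_lintegral_rpow_enorm_lt_top two_ne_zero ofNat_ne_top]
  calc ∫⁻ t, ‖∫ x in Ici 0, Y t x ∂μ‖ₑ ^ (2 : ℝ) ∂ν
      ≤ ∫⁻ t, vNormSq μ (Y t) *
          ∫⁻ x in Ici 0, ENNReal.ofReal (1 / ((1 + x) * omg x)) ∂μ ∂ν := by
        refine lintegral_mono fun t => ?_
        rw [ENNReal.rpow_two]
        exact enorm_setIntegral_Ici_sq_le (Y := Y t)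
          (hY.comp_measurable measurable_prodMk_left).aestronglyMeasurable
    _ = (∫⁻ t, vNormSq μ (Y t) ∂ν) *
          ∫⁻ x in Ici 0, ENNReal.ofReal (1 / ((1 + x) * omg x)) ∂μ :=
        lintegral_mul_const' _ _ hC.ne
    _ < ∞ := mul_lt_top hV hC

/-- For bounded measurable `y`,
`∫_0^T ‖e^{-t·}y‖_V² dt ≤ (1/2 + T) ‖y‖_∞² ∫ ω dμ`; in particular the forcing term
`x(t) = ∫_{[0,∞)} e^{-tx} y(x) μ(dx)` belongs to `L²(0,T;ℝ^d)`. -/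
theorem stmt_11 (μ : Measure ℝ) (d : ℕ) (y : ℝ → EuclideanSpace ℝ (Fin d)) (M T : ℝ)
    (hy : Measurable y) (hM : ∀ x, ‖y x‖ ≤ M) (hT : 0 < T)
    (hω : Integrable omg (μ.restrict (Ici 0)))
    (hP : Integrable (fun x => 1 / ((1 + x) * omg x)) (μ.restrict (Ici 0))) :
    (∫⁻ t in Ioc (0:ℝ) T,
        ∫⁻ x in Ici (0:ℝ),
          ENNReal.ofReal
            (‖Real.exp (-(t * x)) • y x‖ ^ 2 * ((1 + x) * omg x)) ∂μ) ≤
        ENNReal.ofReal ((1/2 + T) * M ^ 2 * ∫ x in Ici (0:ℝ), omg x ∂μ) ∧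
      MemLp (fun t => ∫ x in Ici (0:ℝ), Real.exp (-(t * x)) • y x ∂μ) 2
        (volume.restrict (Ioc (0:ℝ) T)) := by
  have : SigmaFinite (μ.restrict (Ici 0)) :=
    hω.sigmaFinite_of_ae_ne_zero (ae_of_all _ fun x => (omg_pos x).ne')
  have h_energy := lintegral_vNormSq_exp_smul_le (μ := μ) hM hT.le hω
  have h_meas : StronglyMeasurable fun p : ℝ × ℝ => Real.exp (-(p.1 * p.2)) • y p.2 := by
    fun_prop
  exact ⟨h_energy, memLp_two_setIntegral_Ici h_meas (h_energy.trans_lt ofReal_lt_top) hP⟩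
end
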